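/- arXiv:1707.05945 — 2 statements merged into one kernel-verified Lean document; each statement's English description precedes it below -/
import Mathlib

section
/- Let u(y₁) = #(y₂,...,y_k).(ψ(y₁,...,y_k) ∧ δ^σ_{G,2r+1}(y₁,...,y_k)) be a unary basic cl-term of radius r and width k (so ψ is an FO[σ]-formula r-local around (y₁,...,y_k) and G ∈ 𝒢_k is connected), and let R := r + (k−1)(2r+1). Then for every σ-structure A and every a₁ ∈ A, the value u^A[a₁] depends only on the R-neighbourhood of a₁; in particular, u^A[a₁] = u^{𝒩_R^A(a₁)}[a₁]. -/
/-- A (finite, relational) signature: a finite set of relation symbols with arities. -/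
structure Signature : Type 1 where
  symbols : Type
  [fin : Finite symbols]
  arity : symbols → ℕ

attribute [instance] Signature.fin

/-- A σ-structure with universe `M` (finiteness/nonemptiness of `M` is imposed where needed):
an interpretation of each relation symbol. -/
structure StrucOn (σ : Signature) (M : Type) : Type where
  rel : ∀ R : σ.symbols, Set (Fin (σ.arity R) → M)

/-- The Gaifman graph of a structure. -/
def StrucOn.gaifman {σ : Signature} {M : Type} (A : StrucOn σ M) : SimpleGraph M where
  Adj a b := a ≠ b ∧ ∃ (R : σ.symbols) (v : Fin (σ.arity R) → M),
      v ∈ A.rel R ∧ (∃ i, v i = a) ∧ (∃ j, v j = b)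
  symm := ⟨by
    rintro a b ⟨hne, R, v, hv, hi, hj⟩
    exact ⟨hne.symm, R, v, hv, hj, hi⟩⟩
  loopless := ⟨by
    rintro a ⟨hne, -⟩
    exact hne rfl⟩

/-- The Gaifman graph restricted to a set `B` (adjacency within `B`);
walks in this graph correspond to walks in the induced substructure on `B`. -/
def StrucOn.gaifmanOn {σ : Signature} {M : Type} (A : StrucOn σ M) (B : Set M) :
    SimpleGraph M where
  Adj a b := a ∈ B ∧ b ∈ B ∧ A.gaifman.Adj a b
  symm := ⟨by rintro a b ⟨ha, hb, h⟩; exact ⟨hb, ha, h.symm⟩⟩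
  loopless := ⟨by rintro a ⟨-, -, h⟩; exact A.gaifman.ne_of_adj h rfl⟩

/-- `dist^A(a,b) ≤ r` (in the Gaifman graph; `False` when `a,b` are not connected). -/
def distLE {σ : Signature} {M : Type} (A : StrucOn σ M) (a b : M) (r : ℕ) : Prop :=
  ∃ w : A.gaifman.Walk a b, w.length ≤ r

/-- distance at most `r` inside the induced substructure on `B`. -/
def distLEIn {σ : Signature} {M : Type} (A : StrucOn σ M) (B : Set M) (a b : M) (r : ℕ) : Prop :=
  ∃ w : (A.gaifmanOn B).Walk a b, w.length ≤ r

/-- the `r`-ball `N_r^A(ā)` of a tuple. -/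
def ballT {σ : Signature} {M : Type} (A : StrucOn σ M) {k : ℕ} (a : Fin k → M) (r : ℕ) :
    Set M := {b | ∃ i, distLE A (a i) b r}

/-! ## First-order formulas (variables are natural numbers) -/

/-- First-order formulas over the signature `σ`; variables are coded by natural numbers. -/
inductive FOForm (σ : Signature) : Type
  | eq : ℕ → ℕ → FOForm σ
  | rel (R : σ.symbols) (v : Fin (σ.arity R) → ℕ) : FOForm σ
  | not : FOForm σ → FOForm σ
  | or : FOForm σ → FOForm σ → FOForm σ
  | ex : ℕ → FOForm σ → FOForm σ

/-- Free variables of a first-order formula. -/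
def FOForm.free {σ : Signature} : FOForm σ → Set ℕ
  | .eq i j => {i, j}
  | .rel _ v => Set.range v
  | .not φ => φ.free
  | .or φ ψ => φ.free ∪ ψ.free
  | .ex x φ => φ.free \ {x}

/-- Satisfaction relativised to a subset `B` of the universe (quantifiers range over `B`);
for assignments into `B` this is satisfaction in the induced substructure `A[B]`. -/
def FOForm.SatIn {σ : Signature} {M : Type} (A : StrucOn σ M) (B : Set M) :
    FOForm σ → (ℕ → M) → Prop
  | .eq i j, β => β i = β j
  | .rel R v, β => (fun k => β (v k)) ∈ A.rel R
  | .not φ, β => ¬ FOForm.SatIn A B φ β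
  | .or φ ψ, β => FOForm.SatIn A B φ β ∨ FOForm.SatIn A B ψ β
  | .ex x φ, β => ∃ a ∈ B, FOForm.SatIn A B φ (Function.update β x a)

/-- Satisfaction `A ⊨ φ[β]`. -/
def FOForm.Sat {σ : Signature} {M : Type} (A : StrucOn σ M) (φ : FOForm σ) (β : ℕ → M) : Prop :=
  φ.SatIn A Set.univ β

/-- Extend a `k`-tuple (interpreting the variables `0,...,k-1`) by a default assignment. -/
def extA {M : Type} {k : ℕ} (a : Fin k → M) (β : ℕ → M) : ℕ → M :=
  fun n => if h : n < k then a ⟨n, h⟩ else β n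

/-- `A ⊨ φ[ā]` for a `k`-tuple `ā` interpreting the variables `0,...,k-1`
(for formulas with free variables among `0,...,k-1` this is independent of the
remaining values of the assignment). -/
def FOForm.SatT {σ : Signature} {M : Type} (A : StrucOn σ M) (φ : FOForm σ) {k : ℕ}
    (a : Fin k → M) : Prop :=
  ∀ β : ℕ → M, φ.Sat A (extA a β)

/-- `A[B] ⊨ φ[ā]`. -/
def FOForm.SatInT {σ : Signature} {M : Type} (A : StrucOn σ M) (B : Set M) (φ : FOForm σ)
    {k : ℕ} (a : Fin k → M) : Prop :=
  ∀ β : ℕ → M, φ.SatIn A B (extA a β)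

/-- `φ` (with free variables among `x̄ = (0,...,k-1)`) is `r`-local around `x̄`:
for every structure `A` and tuple `ā`, `A ⊨ φ[ā]` iff `𝒩_r^A(ā) ⊨ φ[ā]`. -/
def IsLocal (σ : Signature) (r k : ℕ) (φ : FOForm σ) : Prop :=
  φ.free ⊆ {n | n < k} ∧
  ∀ (M : Type) [Finite M] [Nonempty M] (A : StrucOn σ M) (a : Fin k → M),
    φ.SatT A a ↔ φ.SatInT A (ballT A a r) a

/-- The graph `G_{ā,r}` on `[k]` with an edge between `i ≠ j` iff `dist^A(a_i,a_j) ≤ r`. -/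
def tupleGraph {σ : Signature} {M : Type} (A : StrucOn σ M) {k : ℕ} (a : Fin k → M)
    (r : ℕ) : SimpleGraph (Fin k) where
  Adj i j := i ≠ j ∧ distLE A (a i) (a j) r
  symm := ⟨by
    rintro i j ⟨hne, w, hw⟩
    exact ⟨hne.symm, w.reverse, by simpa using hw⟩⟩
  loopless := ⟨by rintro i ⟨hne, -⟩; exact hne rfl⟩

/-! ## Connected local terms (cl-terms) -/

/-- A basic cl-term of radius `r` and width `k`: the data of a *connected* graph
`G ∈ 𝒢_k` and an `FO[σ]`-formula `ψ(y₁,...,y_k)` (variables `0,...,k-1`) that is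
`r`-local around its variables.  It represents the counting term
`#ȳ.(ψ(ȳ) ∧ δ^σ_{G,2r+1}(ȳ))` (ground form) resp. `#(y₂,...,y_k).(ψ ∧ δ^σ_{G,2r+1})`
(unary form). -/
structure BasicCl (σ : Signature) (r k : ℕ) : Type where
  hk : 0 < k
  G : SimpleGraph (Fin k)
  conn : G.Connected
  ψ : FOForm σ
  loc : IsLocal σ r k ψ

/-- The condition `δ^σ_{G,s}(ā)` relativised to `B`: the distance pattern (within `B`)
of the tuple `ā` is exactly `G` (distance ≤ s for edges, > s for non-edges). -/
def deltaCondIn {σ : Signature} {M : Type} (A : StrucOn σ M) (B : Set M) {k : ℕ}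
    (G : SimpleGraph (Fin k)) (s : ℕ) (a : Fin k → M) : Prop :=
  ∀ i j : Fin k, i ≠ j → (G.Adj i j ↔ distLEIn A B (a i) (a j) s)

/-- Value of the ground basic cl-term `#ȳ.(ψ(ȳ) ∧ δ^σ_{G,2r+1}(ȳ))` evaluated in the
induced substructure `A[B]`. -/
noncomputable def BasicCl.gvalIn {σ : Signature} {r k : ℕ} (b : BasicCl σ r k) {M : Type}
    (A : StrucOn σ M) (B : Set M) : ℤ :=
  (Set.ncard {a : Fin k → M | (∀ i, a i ∈ B) ∧ deltaCondIn A B b.G (2 * r + 1) a ∧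
      b.ψ.SatInT A B a} : ℤ)

/-- Value `u^{A[B]}[a₁]` of the unary basic cl-term
`#(y₂,...,y_k).(ψ(ȳ) ∧ δ^σ_{G,2r+1}(ȳ))` at `a₁`, evaluated in `A[B]`. -/
noncomputable def BasicCl.uvalIn {σ : Signature} {r k : ℕ} (b : BasicCl σ r k) {M : Type}
    (A : StrucOn σ M) (B : Set M) (a₁ : M) : ℤ :=
  (Set.ncard {a : Fin k → M | a ⟨0, b.hk⟩ = a₁ ∧ (∀ i, a i ∈ B) ∧
      deltaCondIn A B b.G (2 * r + 1) a ∧ b.ψ.SatInT A B a} : ℤ)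

/-- cl-terms of radius ≤ r and width ≤ k: built from ground and unary basic cl-terms
(of radius ≤ r and width ≤ k) and integers by `+` and `·`.  A unary basic constituent
carries the name `v` of its free variable. -/
inductive ClTerm (σ : Signature) (r k : ℕ) : Type
  | ground {r' k' : ℕ} (hr : r' ≤ r) (hk : k' ≤ k) (b : BasicCl σ r' k') : ClTerm σ r k
  | unary {r' k' : ℕ} (hr : r' ≤ r) (hk : k' ≤ k) (v : ℕ) (b : BasicCl σ r' k') : ClTerm σ r k
  | int : ℤ → ClTerm σ r k
  | add : ClTerm σ r k → ClTerm σ r k → ClTerm σ r k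
  | mul : ClTerm σ r k → ClTerm σ r k → ClTerm σ r k

/-- A cl-term is ground if it contains no unary basic constituent. -/
def ClTerm.IsGround {σ : Signature} {r k : ℕ} : ClTerm σ r k → Prop
  | .ground _ _ _ => True
  | .unary _ _ _ _ => False
  | .int _ => True
  | .add s t => s.IsGround ∧ t.IsGround
  | .mul s t => s.IsGround ∧ t.IsGround

/-- The set of free variables of a cl-term. -/
def ClTerm.freeSet {σ : Signature} {r k : ℕ} : ClTerm σ r k → Set ℕ
  | .ground _ _ _ => ∅
  | .unary _ _ v _ => {v}
  | .int _ => ∅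
  | .add s t => s.freeSet ∪ t.freeSet
  | .mul s t => s.freeSet ∪ t.freeSet

/-- Value of a cl-term in `A[B]` under the assignment `β`. -/
noncomputable def ClTerm.valIn {σ : Signature} {r k : ℕ} {M : Type} (A : StrucOn σ M)
    (B : Set M) (β : ℕ → M) : ClTerm σ r k → ℤ
  | .ground _ _ b => b.gvalIn A B
  | .unary _ _ v b => b.uvalIn A B (β v)
  | .int n => n
  | .add s t => s.valIn A B β + t.valIn A B β
  | .mul s t => s.valIn A B β * t.valIn A B β

/-- Value of a cl-term in `A` under the assignment `β`. -/
noncomputable def ClTerm.val {σ : Signature} {r k : ℕ} {M : Type} (A : StrucOn σ M)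
    (β : ℕ → M) (t : ClTerm σ r k) : ℤ :=
  t.valIn A Set.univ β

/-! The tuples counted by `u` are chained together by the edges of the connected graph `G`, each
edge spanning distance at most `2r+1`, so every `aᵢ` lies within `(k-1)(2r+1)` of `a₁`, and the
`r`-neighbourhood of the whole tuple lies in the `R`-ball `B` around `a₁`. A walk of length at
most `2r+1` between two entries never leaves their `r`-balls, so the distance pattern `δ` is the
same in `A` and in `A[B]`; and by `r`-locality, applied once in `A` and once in the induced
substructure on `B` (where the `r`-neighbourhood of the tuple is the same), `ψ` holds of the tuple
in `A` iff it holds in `A[B]`. -/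

section Gaifman

variable {σ : Signature} {M : Type} {A : StrucOn σ M}

theorem distLE.refl (A : StrucOn σ M) (a : M) (n : ℕ) : distLE A a a n :=
  ⟨.nil, Nat.zero_le n⟩

theorem distLE.mono {a b : M} {m n : ℕ} (h : distLE A a b m) (hmn : m ≤ n) : distLE A a b n :=
  let ⟨w, hw⟩ := h
  ⟨w, hw.trans hmn⟩

theorem distLE.trans {a b c : M} {m n : ℕ} (h : distLE A a b m) (h' : distLE A b c n) :
    distLE A a c (m + n) :=
  let ⟨w, hw⟩ := h
  let ⟨w', hw'⟩ := h'
  ⟨w.append w', by rw [SimpleGraph.Walk.length_append]; omega⟩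

theorem mem_ballT_self {k : ℕ} (a : Fin k → M) (r : ℕ) (i : Fin k) : a i ∈ ballT A a r :=
  ⟨i, distLE.refl A _ r⟩

theorem distLEIn.le {B : Set M} {a b : M} {n : ℕ} (h : distLEIn A B a b n) : distLE A a b n :=
  let ⟨w, hw⟩ := h
  ⟨w.mapLe fun _ _ (hadj : (A.gaifmanOn B).Adj _ _) => hadj.2.2, by simpa using hw⟩

theorem distLEIn_univ {a b : M} {n : ℕ} : distLEIn A Set.univ a b n ↔ distLE A a b n := by
  have : A.gaifmanOn Set.univ = A.gaifman := by ext; simp [StrucOn.gaifmanOn]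
  rw [distLEIn, distLE, this]

theorem distLE_or_of_mem_support {u v c : M} {r : ℕ} (w : A.gaifman.Walk u v)
    (hw : w.length ≤ 2 * r + 1) (hc : c ∈ w.support) : distLE A u c r ∨ distLE A v c r := by
  classical
  have hlen := congrArg SimpleGraph.Walk.length (w.take_spec hc)
  rw [SimpleGraph.Walk.length_append] at hlen
  rcases le_or_gt (w.takeUntil c hc).length r with h | h
  · exact .inl ⟨w.takeUntil c hc, h⟩
  · exact .inr ⟨(w.dropUntil c hc).reverse, by simp; omega⟩

theorem distLEIn_iff_distLE {B : Set M} {x y : M} {r : ℕ}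
    (hB : ∀ c, distLE A x c r ∨ distLE A y c r → c ∈ B) :
    distLEIn A B x y (2 * r + 1) ↔ distLE A x y (2 * r + 1) := by
  refine ⟨distLEIn.le, fun ⟨w, hw⟩ => ⟨w.transfer (A.gaifmanOn B) fun e he => ?_,
    (w.length_transfer _).trans_le hw⟩⟩
  induction e using Sym2.ind with
  | _ p q =>
    have hB' : ∀ c ∈ w.support, c ∈ B := fun c hc => hB c (distLE_or_of_mem_support w hw hc)
    exact ⟨hB' p (w.fst_mem_support_of_mem_edges he), hB' q (w.snd_mem_support_of_mem_edges he),
      w.adj_of_mem_edges he⟩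

theorem distLE_of_walk {ι : Type*} {G : SimpleGraph ι} {a : ι → M} {s : ℕ}
    (hG : ∀ i j, G.Adj i j → distLE A (a i) (a j) s) {i j : ι} (w : G.Walk i j) :
    distLE A (a i) (a j) (w.length * s) := by
  induction w with
  | nil => exact distLE.refl A _ _
  | cons h _ ih => exact ((hG _ _ h).trans ih).mono (by simp [add_mul]; omega)

theorem distLE_of_connected {ι : Type*} [Fintype ι] {G : SimpleGraph ι} (hconn : G.Connected)
    {a : ι → M} {s : ℕ} (hG : ∀ i j, G.Adj i j → distLE A (a i) (a j) s) (i j : ι) :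
    distLE A (a i) (a j) ((Fintype.card ι - 1) * s) := by
  classical
  obtain ⟨w⟩ := hconn i j
  have hlt : w.toPath.1.length < Fintype.card ι := w.toPath.2.length_lt
  exact (distLE_of_walk hG w.toPath.1).mono (Nat.mul_le_mul_right s (by omega))

theorem deltaCondIn_univ_iff {B : Set M} {k r : ℕ} {G : SimpleGraph (Fin k)} {a : Fin k → M}
    (hB : ballT A a r ⊆ B) :
    deltaCondIn A Set.univ G (2 * r + 1) a ↔ deltaCondIn A B G (2 * r + 1) a := by
  refine forall₂_congr fun i j => imp_congr_right fun _ => ?_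
  rw [distLEIn_univ, distLEIn_iff_distLE]
  rintro c (hc | hc)
  exacts [hB ⟨i, hc⟩, hB ⟨j, hc⟩]

end Gaifman

section Restrict

variable {σ : Signature} {M : Type} (A : StrucOn σ M) {B : Set M}

def StrucOn.restrict (B : Set M) : StrucOn σ B :=
  ⟨fun R => {v | Subtype.val ∘ v ∈ A.rel R}⟩

def StrucOn.restrictGaifmanHom (B : Set M) : (A.restrict B).gaifman →g A.gaifman where
  toFun := Subtype.val
  map_rel' := fun ⟨hne, R, v, hv, ⟨i, hi⟩, ⟨j, hj⟩⟩ =>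
    ⟨Subtype.val_injective.ne hne, R, Subtype.val ∘ v, hv, ⟨i, by simp [hi]⟩, ⟨j, by simp [hj]⟩⟩

variable {A}

theorem distLE.of_restrict {x y : B} {n : ℕ} (h : distLE (A.restrict B) x y n) :
    distLE A x y n :=
  let ⟨w, hw⟩ := h
  ⟨w.map (A.restrictGaifmanHom B), (w.length_map _).trans_le hw⟩

/-- The tuple witnessing the edge lies in the `1`-ball of `u`, hence in `B`. -/
theorem StrucOn.restrict_adj {u x : M} (hB : ∀ c, distLE A u c 1 → c ∈ B)
    (hu : u ∈ B) (hx : x ∈ B) (h : A.gaifman.Adj u x) :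
    (A.restrict B).gaifman.Adj ⟨u, hu⟩ ⟨x, hx⟩ := by
  obtain ⟨hne, R, v, hv, ⟨i, hi⟩, ⟨j, hj⟩⟩ := h
  have hvB : ∀ m, v m ∈ B := fun m => hB _ <| by
    by_cases hm : u = v m
    · exact hm ▸ distLE.refl A u 1
    · exact ⟨.cons ⟨hm, R, v, hv, ⟨i, hi⟩, ⟨m, rfl⟩⟩ .nil, le_rfl⟩
  exact ⟨fun h => hne congr($h.1), R, fun m => ⟨v m, hvB m⟩, hv, ⟨i, Subtype.ext hi⟩,
    ⟨j, Subtype.ext hj⟩⟩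

theorem distLE.restrict {u v : M} {n : ℕ} (h : distLE A u v n)
    (hB : ∀ c, distLE A u c n → c ∈ B) (hu : u ∈ B) (hv : v ∈ B) :
    distLE (A.restrict B) ⟨u, hu⟩ ⟨v, hv⟩ n := by
  obtain ⟨w, hw⟩ := h
  induction w generalizing n with
  | nil => exact distLE.refl _ _ n
  | @cons u x v hux p ih =>
    rw [SimpleGraph.Walk.length_cons] at hw
    obtain ⟨n, rfl⟩ : ∃ n', n = n' + 1 := ⟨n - 1, by omega⟩
    have hux' : distLE A u x 1 := ⟨.cons hux .nil, le_rfl⟩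
    have hx : x ∈ B := hB x (hux'.mono (by omega))
    have hxv := ih (n := n) (fun c hc => hB c ((hux'.trans hc).mono (by omega))) hx hv (by omega)
    have hadj : distLE (A.restrict B) ⟨u, hu⟩ ⟨x, hx⟩ 1 :=
      ⟨.cons (StrucOn.restrict_adj (fun c hc => hB c (hc.mono (by omega))) hu hx hux) .nil, le_rfl⟩
    exact (hadj.trans hxv).mono (by omega)

theorem ballT_restrict {k r : ℕ} (a : Fin k → B) (hB : ballT A (Subtype.val ∘ a) r ⊆ B) :
    ballT (A.restrict B) a r = Subtype.val ⁻¹' ballT A (Subtype.val ∘ a) r := by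
  ext c
  refine ⟨fun ⟨i, hc⟩ => ⟨i, hc.of_restrict⟩, fun ⟨i, hc⟩ => ⟨i, ?_⟩⟩
  exact hc.restrict (fun d hd => hB ⟨i, hd⟩) (a i).2 c.2

end Restrict

section Satisfaction

variable {σ : Signature} {M : Type} {A : StrucOn σ M}

theorem FOForm.satIn_congr {C : Set M} (φ : FOForm σ) {β γ : ℕ → M}
    (h : ∀ n ∈ φ.free, β n = γ n) : φ.SatIn A C β ↔ φ.SatIn A C γ := by
  induction φ generalizing β γ with
  | eq i j => simp [FOForm.SatIn, h i (by simp [FOForm.free]), h j (by simp [FOForm.free])]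
  | rel R v =>
    simp only [FOForm.SatIn]
    rw [funext fun m => h (v m) ⟨m, rfl⟩]
  | not φ ih => exact not_congr (ih h)
  | or φ ψ ihφ ihψ =>
    exact or_congr (ihφ fun n hn => h n (.inl hn)) (ihψ fun n hn => h n (.inr hn))
  | ex x φ ih =>
    refine exists_congr fun c => and_congr_right fun _ => ih fun n hn => ?_
    by_cases hx : n = x
    · simp [hx]
    · simpa [hx] using h n ⟨hn, hx⟩

theorem FOForm.satInT_iff_satIn {C : Set M} {φ : FOForm σ} {k : ℕ}
    (hfree : φ.free ⊆ {n | n < k}) (a : Fin k → M) (β₀ : ℕ → M) :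
    φ.SatInT A C a ↔ φ.SatIn A C (extA a β₀) :=
  ⟨fun h => h β₀, fun h β =>
    (φ.satIn_congr fun n hn => by simp [extA, show n < k from hfree hn]).1 h⟩

theorem FOForm.satIn_restrict {B C : Set M} (hCB : C ⊆ B) (φ : FOForm σ) (β : ℕ → B) :
    φ.SatIn (A.restrict B) (Subtype.val ⁻¹' C) β ↔ φ.SatIn A C (Subtype.val ∘ β) := by
  induction φ generalizing β with
  | eq i j => exact Subtype.ext_iff
  | rel R v => exact Iff.rfl
  | not φ ih => exact not_congr (ih β)
  | or φ ψ ihφ ihψ => exact or_congr (ihφ β) (ihψ β)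
  | ex x φ ih =>
    have hupd : ∀ c : B, Subtype.val ∘ Function.update β x c =
        Function.update (Subtype.val ∘ β) x c.1 := fun c =>
      Function.comp_update Subtype.val β x c
    simp only [FOForm.SatIn, ih, hupd]
    exact ⟨fun ⟨c, hc, h⟩ => ⟨c, hc, h⟩, fun ⟨c, hc, h⟩ => ⟨⟨c, hCB hc⟩, hc, h⟩⟩

theorem FOForm.satInT_restrict {B C : Set M} (hCB : C ⊆ B) {φ : FOForm σ} {k : ℕ}
    (hfree : φ.free ⊆ {n | n < k}) (hk : 0 < k) (a : Fin k → B) :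
    φ.SatInT (A.restrict B) (Subtype.val ⁻¹' C) a ↔ φ.SatInT A C (Subtype.val ∘ a) := by
  let β₀ : ℕ → B := fun _ => a ⟨0, hk⟩
  have hext : Subtype.val ∘ extA a β₀ = extA (Subtype.val ∘ a) (Subtype.val ∘ β₀) := by
    funext n; by_cases hn : n < k <;> simp [extA, hn]
  rw [satInT_iff_satIn hfree a β₀, satInT_iff_satIn hfree _ (Subtype.val ∘ β₀), satIn_restrict hCB,
    hext]

theorem IsLocal.satT_iff_satInT [Finite M] {r k : ℕ} {φ : FOForm σ} (hloc : IsLocal σ r k φ)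
    (hk : 0 < k) {B : Set M} {a : Fin k → M} (hB : ballT A a r ⊆ B) :
    φ.SatT A a ↔ φ.SatInT A B a := by
  let a' : Fin k → B := fun i => ⟨a i, hB (mem_ballT_self a r i)⟩
  have : Nonempty M := ⟨a ⟨0, hk⟩⟩
  have : Nonempty B := ⟨a' ⟨0, hk⟩⟩
  have huniv : (Set.univ : Set B) = Subtype.val ⁻¹' B := by simp
  calc φ.SatT A a
      ↔ φ.SatInT A (ballT A a r) a := hloc.2 M A a
    _ ↔ φ.SatInT (A.restrict B) (ballT (A.restrict B) a' r) a' := by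
      rw [ballT_restrict a' hB]; exact (FOForm.satInT_restrict hB hloc.1 hk a').symm
    _ ↔ φ.SatInT (A.restrict B) Set.univ a' := (hloc.2 B (A.restrict B) a').symm
    _ ↔ φ.SatInT A B a := by rw [huniv]; exact FOForm.satInT_restrict subset_rfl hloc.1 hk a'

end Satisfaction

theorem BasicCl.ballT_subset {σ : Signature} {r k : ℕ} (b : BasicCl σ r k) {M : Type}
    {A : StrucOn σ M} {C : Set M} {a : Fin k → M} (ha : deltaCondIn A C b.G (2 * r + 1) a) :
    ballT A a r ⊆ ballT A ![a ⟨0, b.hk⟩] (r + (k - 1) * (2 * r + 1)) := by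
  rintro c ⟨i, hc⟩
  have hclose := distLE_of_connected b.conn (fun i j h => ((ha i j h.ne).1 h).le) ⟨0, b.hk⟩ i
  rw [Fintype.card_fin] at hclose
  exact ⟨0, (hclose.trans hc).mono (by omega)⟩

theorem unary_basic_clTerm_local_general (σ : Signature) (r k : ℕ) (b : BasicCl σ r k)
    (M : Type) [Finite M] (A : StrucOn σ M) (a₁ : M) :
    b.uvalIn A Set.univ a₁ =
      b.uvalIn A (ballT A ![a₁] (r + (k - 1) * (2 * r + 1))) a₁ := by
  unfold BasicCl.uvalIn
  congr 2
  ext a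
  simp only [Set.mem_ofPred_eq, Set.mem_univ, implies_true, true_and]
  constructor
  · rintro ⟨rfl, hδ, hψ⟩
    have hB := b.ballT_subset hδ
    exact ⟨rfl, fun i => hB (mem_ballT_self a r i), (deltaCondIn_univ_iff hB).1 hδ,
      (b.loc.satT_iff_satInT b.hk hB).1 hψ⟩
  · rintro ⟨rfl, -, hδ, hψ⟩
    have hB := b.ballT_subset hδ
    exact ⟨rfl, (deltaCondIn_univ_iff hB).2 hδ, (b.loc.satT_iff_satInT b.hk hB).2 hψ⟩

/-- Remark `rem:radius`: the value `u^A[a₁]` of a unary basic cl-term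
`u(y₁) = #(y₂,...,y_k).(ψ ∧ δ^σ_{G,2r+1})` of radius `r` and width `k` can be computed in
the `R`-neighbourhood of `a₁` for `R = r + (k-1)(2r+1)`; in particular
`u^A[a₁] = u^{𝒩_R^A(a₁)}[a₁]`. -/
theorem unary_basic_clTerm_local (σ : Signature) (r k : ℕ) (b : BasicCl σ r k)
    (M : Type) [Finite M] [Nonempty M] (A : StrucOn σ M) (a₁ : M) :
    b.uvalIn A Set.univ a₁ =
      b.uvalIn A (ballT A ![a₁] (r + (k - 1) * (2 * r + 1))) a₁ :=
  unary_basic_clTerm_local_general σ r k b M A a₁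
end

section
/- Let ℓ, r > 0 and let G be a finite graph. If Splitter has a winning strategy in the (ℓ,r)-splitter game on G, then Splitter has a winning strategy in the (ℓ,r)-splitter game on every subgraph of G. -/
/-! Splitter transfers her strategy along any injective graph homomorphism `f : G' → G`: she
answers Connector's move `a` in `G'` by imagining the move `f a` in `G`. Since `f` maps walks to
walks, it maps the radius-`r` ball around `a` into the ball around `f a`; if her answer `b` in `G`
has a preimage in the ball she removes it, otherwise she removes `a` itself. Either way, `f` maps
the remaining arena into the remaining arena of the game on `G`, and the argument recurses. -/

/-- The graph `G` restricted to the vertex set `s` (viewed as a graph on the ambient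
vertex type, with edges only inside `s`). -/
def restrictG {V : Type} (G : SimpleGraph V) (s : Set V) : SimpleGraph V where
  Adj a b := a ∈ s ∧ b ∈ s ∧ G.Adj a b
  symm := ⟨by rintro a b ⟨ha, hb, h⟩; exact ⟨hb, ha, h.symm⟩⟩
  loopless := ⟨by rintro a ⟨-, -, h⟩; exact G.irrefl h⟩

/-- `N_r^{G[s]}(a)`: the ball of radius `r` around `a` in the subgraph of `G` induced on `s`. -/
def ballIn {V : Type} (G : SimpleGraph V) (s : Set V) (a : V) (r : ℕ) : Set V :=
  {b | b ∈ s ∧ ∃ w : (restrictG G s).Walk a b, w.length ≤ r}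

/-- Splitter has a winning strategy in the `(ℓ,r)`-splitter game played on the subgraph of `G`
induced on the vertex set `s`.  In each round Connector picks `a ∈ s`, Splitter answers with
some `b ∈ N_r(a)`; Splitter wins immediately if `N_r(a) ∖ {b} = ∅`, and otherwise the game
continues on the induced subgraph on `N_r(a) ∖ {b}` with one round less. -/
def SplitterWins {V : Type} (G : SimpleGraph V) (r : ℕ) : ℕ → Set V → Prop
  | 0, _ => False
  | ℓ + 1, s => ∀ a ∈ s, ∃ b ∈ ballIn G s a r,
      (ballIn G s a r \ {b} = ∅) ∨ SplitterWins G r ℓ (ballIn G s a r \ {b})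

open Set

theorem Set.exists_mapsTo_diff_singleton {α β : Type*} {f : α → β} (hf : Function.Injective f)
    {A : Set α} {B : Set β} (hAB : MapsTo f A B) {a : α} (ha : a ∈ A) (b : β) :
    ∃ a' ∈ A, MapsTo f (A \ {a'}) (B \ {b}) := by
  by_cases hb : ∃ x ∈ A, f x = b
  · obtain ⟨a', ha', rfl⟩ := hb
    exact ⟨a', ha', fun x hx => ⟨hAB hx.1, fun hfx => hx.2 (hf hfx)⟩⟩
  · exact ⟨a, ha, fun x hx => ⟨hAB hx.1, fun hfx => hb ⟨x, hx.1, hfx⟩⟩⟩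

variable {V' V : Type} {G' : SimpleGraph V'} {G : SimpleGraph V}

def SimpleGraph.Hom.restrictG (f : G' →g G) {t : Set V'} {s : Set V} (hts : MapsTo f t s) :
    restrictG G' t →g restrictG G s where
  toFun := f
  map_rel' := fun ⟨hx, hy, hxy⟩ => ⟨hts hx, hts hy, f.map_adj hxy⟩

theorem mapsTo_ballIn (f : G' →g G) {t : Set V'} {s : Set V} (hts : MapsTo f t s) (a : V')
    (r : ℕ) : MapsTo f (ballIn G' t a r) (ballIn G s (f a) r) := by
  rintro x ⟨hx, w, hw⟩
  exact ⟨hts hx, w.map (f.restrictG hts), (w.length_map _).trans_le hw⟩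

theorem SplitterWins.of_injective_hom (f : G' →g G) (hf : Function.Injective f) (r : ℕ) :
    ∀ {ℓ : ℕ} {t : Set V'} {s : Set V}, MapsTo f t s →
      SplitterWins G r ℓ s → SplitterWins G' r ℓ t
  | 0, _, _, _, h => h.elim
  | _ + 1, _, _, hts, h => by
    intro a ha
    obtain ⟨b, -, hb⟩ := h (f a) (hts ha)
    have ha_ball : a ∈ ballIn G' _ a r := ⟨ha, .nil, Nat.zero_le r⟩
    obtain ⟨b', hb'_ball, hmaps⟩ :=
      exists_mapsTo_diff_singleton hf (mapsTo_ballIn f hts a r) ha_ball b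
    refine ⟨b', hb'_ball, ?_⟩
    rcases hb with hempty | hwin
    · exact .inl (mapsTo_empty_iff.1 (hempty ▸ hmaps))
    · exact .inr (of_injective_hom f hf r hmaps hwin)

theorem splitterWins_subgraph_general (V : Type) (G : SimpleGraph V) (ℓ r : ℕ)
    (h : SplitterWins G r ℓ (Set.univ : Set V)) (H : G.Subgraph) :
    SplitterWins H.coe r ℓ (Set.univ : Set H.verts) :=
  h.of_injective_hom H.hom SimpleGraph.Subgraph.hom_injective r (mapsTo_univ _ _)

/-- if Splitter wins the `(ℓ,r)`-splitter game on a finite graph `G`,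
then she wins the `(ℓ,r)`-splitter game on every subgraph of `G`. -/
theorem splitterWins_subgraph (V : Type) [Fintype V] (G : SimpleGraph V) (ℓ r : ℕ)
    (hℓ : 0 < ℓ) (hr : 0 < r)
    (h : SplitterWins G r ℓ (Set.univ : Set V)) (H : G.Subgraph) :
    SplitterWins H.coe r ℓ (Set.univ : Set H.verts) :=
  splitterWins_subgraph_general V G ℓ r h H
end
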